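/- Let 0 < d < 1, let A be the 2×2 matrix with (1,2)-entry 1 and all other entries 0, and let D = diag(d, 1). Then w(A) = 1/2, w(AD⁻¹) = 1/2, and w(DA) = d/2, so w(A)² > w(DA)·w(AD⁻¹). Hence the mixed inequality w(A)² ≤ w(DA)·w(AD⁻¹) fails even for entrywise nonnegative A and positive diagonal D. -/

import Mathlib

open scoped Matrix

/-- The numerical radius of an `n × n` complex matrix, viewed as an operator on `ℂⁿ`
with the Euclidean norm. -/
noncomputable def matNumRad {n : ℕ} (M : Matrix (Fin n) (Fin n) ℂ) : ℝ :=
  sSup {r : ℝ | ∃ x : EuclideanSpace ℂ (Fin n), ‖x‖ = 1 ∧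
    r = ‖(inner ℂ (Matrix.toEuclideanCLM (𝕜 := ℂ) M x) x : ℂ)‖}

/-!
For `N = !![0, c; 0, 0]` and a unit vector `x` one has `|⟨N x, x⟩| = |c| |x₀| |x₁|`, and
`2 |x₀| |x₁| ≤ |x₀|² + |x₁|² = 1` with equality when `|x₀| = |x₁|`; hence `w(N) = |c| / 2`.
With `D = diag(d, 1)`, both `A D⁻¹ = A` and `D A = !![0, d; 0, 0]` are of this form.
-/

section MatrixIdentities

variable {K : Type*} [Field K]

lemma diag_fin_two_mul_nilpotent (a b c : K) :
    !![a, 0; 0, b] * !![0, c; 0, 0] = !![0, a * c; 0, 0] := by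
  simp

lemma nilpotent_mul_inv_diag_fin_two (a b c : K) (ha : a ≠ 0) (hb : b ≠ 0) :
    !![0, c; 0, 0] * !![a, 0; 0, b]⁻¹ = !![0, c / b; 0, 0] := by
  have hinv : !![a, 0; 0, b]⁻¹ = !![a⁻¹, 0; 0, b⁻¹] :=
    Matrix.inv_eq_right_inv (by simp [Matrix.one_fin_two, ha, hb])
  rw [hinv, Matrix.mul_fin_two]
  simp [div_eq_mul_inv]

end MatrixIdentities

lemma EuclideanSpace.norm_sq_fin_two (x : EuclideanSpace ℂ (Fin 2)) :
    ‖x‖ ^ 2 = ‖x 0‖ ^ 2 + ‖x 1‖ ^ 2 := by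
  simp [EuclideanSpace.norm_sq_eq, Fin.sum_univ_two]

lemma norm_inner_toEuclideanCLM_nilpotent (c : ℂ) (x : EuclideanSpace ℂ (Fin 2)) :
    ‖(inner ℂ (Matrix.toEuclideanCLM (𝕜 := ℂ) !![0, c; 0, 0] x) x : ℂ)‖
      = ‖c‖ * (‖x 0‖ * ‖x 1‖) := by
  have hNx : ∀ i, Matrix.toEuclideanCLM (𝕜 := ℂ) !![0, c; 0, 0] x i
      = (!![0, c; 0, 0] *ᵥ x.ofLp) i :=
    fun i => congrFun (Matrix.ofLp_toEuclideanCLM _ x) i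
  simp [PiLp.inner_apply, Fin.sum_univ_two, hNx, Matrix.mulVec, dotProduct]
  ring

lemma matNumRad_nilpotent (c : ℂ) : matNumRad !![0, c; 0, 0] = ‖c‖ / 2 := by
  apply IsGreatest.csSup_eq
  constructor
  · set t : ℝ := Real.sqrt (1 / 2)
    have ht : t * t = 1 / 2 := Real.mul_self_sqrt (by norm_num)
    have hnorm_t : ‖(t : ℂ)‖ = t := by simp [t]
    refine ⟨!₂[(t : ℂ), (t : ℂ)], ?_, ?_⟩
    · rw [← pow_eq_one_iff_of_nonneg (norm_nonneg _) two_ne_zero, EuclideanSpace.norm_sq_fin_two]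
      simp only [Matrix.cons_val_zero, Matrix.cons_val_one, hnorm_t]
      linarith
    · rw [norm_inner_toEuclideanCLM_nilpotent]
      simp only [Matrix.cons_val_zero, Matrix.cons_val_one, hnorm_t, ht]
      ring
  · rintro r ⟨x, hx, rfl⟩
    have hsq : ‖x 0‖ ^ 2 + ‖x 1‖ ^ 2 = 1 := by
      rw [← EuclideanSpace.norm_sq_fin_two, hx, one_pow]
    have hamgm := two_mul_le_add_sq ‖x 0‖ ‖x 1‖
    rw [norm_inner_toEuclideanCLM_nilpotent]
    nlinarith [norm_nonneg c]

theorem numRad_mixed_counterexample (d : ℝ) (hd0 : 0 < d) (hd1 : d < 1) :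
    matNumRad (!![0, 1; 0, 0] : Matrix (Fin 2) (Fin 2) ℂ) = 1 / 2 ∧
    matNumRad ((!![0, 1; 0, 0] : Matrix (Fin 2) (Fin 2) ℂ) *
        (!![(d : ℂ), 0; 0, 1])⁻¹) = 1 / 2 ∧
    matNumRad ((!![(d : ℂ), 0; 0, 1]) * !![0, 1; 0, 0]) = d / 2 ∧
    matNumRad ((!![(d : ℂ), 0; 0, 1]) * !![0, 1; 0, 0]) *
        matNumRad ((!![0, 1; 0, 0] : Matrix (Fin 2) (Fin 2) ℂ) * (!![(d : ℂ), 0; 0, 1])⁻¹)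
      < matNumRad (!![0, 1; 0, 0] : Matrix (Fin 2) (Fin 2) ℂ) ^ 2 := by
  have hd : (d : ℂ) ≠ 0 := by exact_mod_cast hd0.ne'
  have hA : matNumRad (!![0, 1; 0, 0] : Matrix (Fin 2) (Fin 2) ℂ) = 1 / 2 := by
    simp [matNumRad_nilpotent]
  have hAD : matNumRad ((!![0, 1; 0, 0] : Matrix (Fin 2) (Fin 2) ℂ) *
      (!![(d : ℂ), 0; 0, 1])⁻¹) = 1 / 2 := by
    rw [nilpotent_mul_inv_diag_fin_two _ _ _ hd one_ne_zero, div_one, hA]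
  have hDA : matNumRad ((!![(d : ℂ), 0; 0, 1]) * !![0, 1; 0, 0]) = d / 2 := by
    rw [diag_fin_two_mul_nilpotent, mul_one, matNumRad_nilpotent, Complex.norm_real,
      Real.norm_of_nonneg hd0.le]
  refine ⟨hA, hAD, hDA, ?_⟩
  rw [hA, hAD, hDA]
  linarith
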